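/- (Admissibility of the prefix-alignment heuristic) Let N^S be the SPN of a trace σ of length n and a WF-net N, let c : T^S → ℝ_{≥0} be a cost function, and let h be the prefix-alignment heuristic defined by the corresponding integer linear program. Then for every reachable marking M ∈ R(N^S, M_i^S) and every firing sequence σ_t ∈ (T^S)* with (N^S, M) →^{σ_t} (N^S, M') ending in a goal marking M' (i.e., M'(p'_n) ≥ 1), it holds that h(M) ≤ Σ_{t occurring in σ_t} c(t) (counting multiplicities). Hence h(M) is a lower bound on the remaining cost from M to any goal marking, i.e., h is admissible. -/

import Mathlib

open scoped ENNReal NNReal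

/-- A transition ("move") of a synchronous product net (SPN): a log move `(t'_j, ≫)`,
a model move `(≫, t)`, or a synchronous move `(t'_j, t)`. -/
inductive Move (T : Type) where
  | log   (j : ℕ)
  | model (t : T)
  | sync  (j : ℕ) (t : T)
  deriving DecidableEq

/-- A WF-net: a Petri net with labelled transitions (`none` represents the silent
label `τ`), a unique source place and a unique sink place.  `pre t` is the preset
`•t` and `post t` is the postset `t•` of a transition `t`. -/
structure WFNet (P T A : Type) where
  pre    : T → Set P
  post   : T → Set P
  label  : T → Option A
  source : P
  sink   : P
  source_ne_sink : source ≠ sink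
  no_arc_into_source : ∀ t, source ∉ post t
  no_arc_out_of_sink : ∀ t, sink ∉ pre t

/-- A marking of the SPN: a multiset over the SPN places, where `Sum.inl j` is the
trace-net place `p'_j` and `Sum.inr p` is a process-model place. -/
abbrev Marking (P : Type) := (ℕ ⊕ P) → ℕ

namespace SPN

variable {P T A : Type}

/-- The places `P^S = P^σ ∪ P` of the SPN of a trace `σ`: the trace-net places
`p'_0, …, p'_{|σ|}` together with all process-model places. -/
def places (P : Type) {A : Type} (σ : List A) : Set (ℕ ⊕ P) :=
  fun q => match q with
  | Sum.inl j => j ≤ σ.length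
  | Sum.inr _ => True

/-- The transitions `T^S` of the SPN of trace `σ` and WF-net `N`: log moves
`(t'_j, ≫)` for `1 ≤ j ≤ |σ|`, model moves `(≫, t)` for all model transitions `t`,
and synchronous moves `(t'_j, t)` whenever `λ(t) = σ(j) ≠ τ`. -/
def transitions (σ : List A) (N : WFNet P T A) : Set (Move T) :=
  fun m => match m with
  | Move.log j => 1 ≤ j ∧ j ≤ σ.length
  | Move.model _ => True
  | Move.sync j t => 1 ≤ j ∧ ∃ a, σ[j - 1]? = some a ∧ N.label t = some a

/-- Preset `•m` of an SPN transition `m`. -/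
def pre (N : WFNet P T A) : Move T → Set (ℕ ⊕ P)
  | Move.log j => {Sum.inl (j - 1)}
  | Move.model t => Sum.inr '' N.pre t
  | Move.sync j t => {Sum.inl (j - 1)} ∪ Sum.inr '' N.pre t

/-- Postset `m•` of an SPN transition `m`. -/
def post (N : WFNet P T A) : Move T → Set (ℕ ⊕ P)
  | Move.log j => {Sum.inl j}
  | Move.model t => Sum.inr '' N.post t
  | Move.sync j t => {Sum.inl j} ∪ Sum.inr '' N.post t

/-- The flow relation `F^S` of the SPN: arcs from places to transitions and from
transitions to places. -/
def flow (σ : List A) (N : WFNet P T A) :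
    Set (((ℕ ⊕ P) × Move T) ⊕ (Move T × (ℕ ⊕ P))) :=
  fun f => match f with
  | Sum.inl (q, m) => m ∈ transitions σ N ∧ q ∈ pre N m
  | Sum.inr (m, q) => m ∈ transitions σ N ∧ q ∈ post N m

open Classical in
/-- The initial marking `M_i^S = [p'_0, p_i]` of the SPN. -/
noncomputable def init (σ : List A) (N : WFNet P T A) : Marking P :=
  fun q => if q = Sum.inl 0 ∨ q = Sum.inr N.source then 1 else 0

open Classical in
/-- The final marking `M_f^S = [p'_{|σ|}, p_o]` of the SPN. -/
noncomputable def final (σ : List A) (N : WFNet P T A) : Marking P :=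
  fun q => if q = Sum.inl σ.length ∨ q = Sum.inr N.sink then 1 else 0

/-- `m` is enabled in marking `M`, `(N^S, M)[m⟩`, w.r.t. the transition set `S`. -/
def Enabled (N : WFNet P T A) (S : Set (Move T)) (M : Marking P) (m : Move T) : Prop :=
  m ∈ S ∧ ∀ q ∈ pre N m, 0 < M q

open Classical in
/-- The marking obtained by firing transition `m` in marking `M`. -/
noncomputable def fire (N : WFNet P T A) (m : Move T) (M : Marking P) : Marking P :=
  fun q =>
    if q ∈ pre N m ∧ q ∉ post N m then M q - 1
    else if q ∈ post N m ∧ q ∉ pre N m then M q + 1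
    else M q

/-- `FiresTo N S M ts M'`: firing the sequence `ts` of transitions from marking `M`
yields marking `M'` (each fired transition being enabled). -/
def FiresTo (N : WFNet P T A) (S : Set (Move T)) :
    Marking P → List (Move T) → Marking P → Prop
  | M, [], M' => M = M'
  | M, m :: ms, M' => Enabled N S M m ∧ FiresTo N S (fire N m M) ms M'

/-- `M` is reachable from `M₀`. -/
def Reachable (N : WFNet P T A) (S : Set (Move T)) (M₀ M : Marking P) : Prop :=
  ∃ ts, FiresTo N S M₀ ts M

/-- `M ∈ B(P^S)` for the SPN of `σ`: the marking only uses places of the SPN of `σ`. -/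
def SupportedOn (σ : List A) (M : Marking P) : Prop :=
  ∀ q, 0 < M q → q ∈ places P σ

/-- The standard cost function: synchronous moves and invisible model moves cost `0`,
log moves and visible model moves cost `1`. -/
def stdCost (N : WFNet P T A) : Move T → ℝ≥0
  | Move.log _ => 1
  | Move.model t => match N.label t with | none => 0 | some _ => 1
  | Move.sync _ _ => 0

/-- Total cost of a firing sequence. -/
noncomputable def seqCost (c : Move T → ℝ≥0) (ts : List (Move T)) : ℝ≥0∞ :=
  (ts.map fun m => (c m : ℝ≥0∞)).sum

/-- Feasible solutions of the ILP defining the prefix-alignment heuristic at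
marking `M`: for every trace-net place the marking equation must reach the final
marking exactly, for every process-model place non-negativity suffices. -/
def Feasible (σ : List A) (N : WFNet P T A) (M : Marking P) (x : Move T → ℕ) : Prop :=
  (∀ j ≤ σ.length,
      (M (Sum.inl j) : ℤ)
        + ∑ᶠ m ∈ {m | m ∈ transitions σ N ∧ Sum.inl j ∈ post N m}, (x m : ℤ)
        - ∑ᶠ m ∈ {m | m ∈ transitions σ N ∧ Sum.inl j ∈ pre N m}, (x m : ℤ)
      = (final σ N (Sum.inl j) : ℤ))
  ∧ ∀ p : P,
      (0 : ℤ) ≤ (M (Sum.inr p) : ℤ)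
        + ∑ᶠ m ∈ {m | m ∈ transitions σ N ∧ Sum.inr p ∈ post N m}, (x m : ℤ)
        - ∑ᶠ m ∈ {m | m ∈ transitions σ N ∧ Sum.inr p ∈ pre N m}, (x m : ℤ)

/-- The prefix-alignment heuristic `h(M)`: the optimal value of the ILP
(`∞` if no feasible solution exists). -/
noncomputable def heuristic (σ : List A) (N : WFNet P T A) (c : Move T → ℝ≥0)
    (M : Marking P) : ℝ≥0∞ :=
  ⨅ (x : Move T → ℕ) (_ : Feasible σ N M x),
    ∑ᶠ m ∈ transitions σ N, (x m : ℝ≥0∞) * (c m : ℝ≥0∞)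

/-- Minimal cost of a firing sequence from `M₀` to `M` (`∞` if `M` is unreachable). -/
noncomputable def costToReach (N : WFNet P T A) (S : Set (Move T)) (d : Move T → ℝ≥0)
    (M₀ M : Marking P) : ℝ≥0∞ :=
  ⨅ (ts : List (Move T)) (_ : FiresTo N S M₀ ts M), seqCost d ts

/-- Minimal cost of a firing sequence from `M` to a goal marking, i.e. a marking
with a token in the trace-net place `p'_n`. -/
noncomputable def costToGoal (N : WFNet P T A) (S : Set (Move T)) (d : Move T → ℝ≥0)
    (n : ℕ) (M : Marking P) : ℝ≥0∞ :=
  ⨅ (ts : List (Move T)) (_ : ∃ M', FiresTo N S M ts M' ∧ 1 ≤ M' (Sum.inl n)), seqCost d ts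

end SPN

/-!
The trace net is a path `p'_0 → ⋯ → p'_n`, and every SPN move either leaves it untouched
(model moves) or shifts a token from `p'_{j-1}` to `p'_j` (log and synchronous moves). Starting
from `[p'_0]`, every reachable marking therefore carries exactly one token on the trace places,
and a goal marking carries it on `p'_n`, i.e. agrees with `M_f^S` there. Hence the Parikh vector
of a firing sequence from `M` to a goal marking solves the marking equation of the ILP, and its
cost is the cost of the sequence.
-/

theorem finsum_mem_count_smul {α M : Type*} [DecidableEq α] [AddCommMonoid M] {s : Set α}
    {l : List α} (hl : ∀ a ∈ l, a ∈ s) (f : α → M) :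
    ∑ᶠ a ∈ s, l.count a • f a = (l.map f).sum := by
  rw [Finset.sum_list_map_count, finsum_mem_eq_sum_of_subset]
  · intro a ha
    have hcount : l.count a ≠ 0 := fun h => ha.2 (by simp [h])
    simpa using List.count_pos_iff.1 (Nat.pos_of_ne_zero hcount)
  · intro a ha
    exact hl a (List.mem_toFinset.1 ha)

theorem finsum_mem_sep_count {α : Type*} [DecidableEq α] {s : Set α} {l : List α}
    (hl : ∀ a ∈ l, a ∈ s) (p : α → Prop) [DecidablePred p] :
    ∑ᶠ a ∈ {a | a ∈ s ∧ p a}, (l.count a : ℤ) = l.countP (fun a => p a) := by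
  have hfilter : ∀ a ∈ l.filter (fun a => p a), a ∈ {a | a ∈ s ∧ p a} := by
    intro a ha
    rw [List.mem_filter, decide_eq_true_iff] at ha
    exact ⟨hl a ha.1, ha.2⟩
  calc ∑ᶠ a ∈ {a | a ∈ s ∧ p a}, (l.count a : ℤ)
      = ∑ᶠ a ∈ {a | a ∈ s ∧ p a}, (l.filter (fun a => p a)).count a • (1 : ℤ) :=
        finsum_mem_congr rfl fun a ha => by
          rw [List.count_filter (p := fun a => decide (p a)) (decide_eq_true ha.2), nsmul_one]
    _ = l.countP (fun a => p a) := by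
        rw [finsum_mem_count_smul hfilter]
        simp [List.countP_eq_length_filter]

namespace SPN

variable {P T A : Type}

open Classical in
theorem fire_apply_cast {N : WFNet P T A} {M : Marking P} {m : Move T}
    (hm : ∀ q ∈ pre N m, 0 < M q) (q : ℕ ⊕ P) :
    (fire N m M q : ℤ) =
      M q + (if q ∈ post N m then 1 else 0) - (if q ∈ pre N m then 1 else 0) := by
  by_cases hpre : q ∈ pre N m <;> by_cases hpost : q ∈ post N m <;> simp [fire, hpre, hpost]
  have := hm q hpre
  omega

open Classical in
theorem FiresTo.cast_apply {N : WFNet P T A} {S : Set (Move T)} {M M' : Marking P}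
    {ts : List (Move T)} (h : FiresTo N S M ts M') (q : ℕ ⊕ P) :
    (M' q : ℤ) =
      M q + ts.countP (fun m => q ∈ post N m) - ts.countP (fun m => q ∈ pre N m) := by
  induction ts generalizing M with
  | nil => cases h; simp
  | cons m ts ih =>
    rw [ih h.2, fire_apply_cast h.1.2, List.countP_cons, List.countP_cons]
    push_cast
    simp only [decide_eq_true_eq]
    ring

theorem FiresTo.mem {N : WFNet P T A} {S : Set (Move T)} {M M' : Marking P}
    {ts : List (Move T)} (h : FiresTo N S M ts M') : ∀ m ∈ ts, m ∈ S := by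
  induction ts generalizing M with
  | nil => simp
  | cons m ts ih =>
    intro m' hm'
    rcases List.mem_cons.1 hm' with rfl | hm'
    · exact h.1.1
    · exact ih h.2 m' hm'

def TraceTokenAt (M : Marking P) (j : ℕ) : Prop :=
  ∀ k, M (Sum.inl k) = if k = j then 1 else 0

theorem traceTokenAt_init (σ : List A) (N : WFNet P T A) : TraceTokenAt (init σ N) 0 := by
  intro k
  simp [init]

theorem TraceTokenAt.fire_of_shift {N : WFNet P T A} {M : Marking P} {m : Move T} {j j' : ℕ}
    (hM : TraceTokenAt M j) (hm : ∀ q ∈ pre N m, 0 < M q)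
    (hpre : ∀ k, Sum.inl k ∈ pre N m ↔ k = j' - 1)
    (hpost : ∀ k, Sum.inl k ∈ post N m ↔ k = j') :
    TraceTokenAt (fire N m M) j' := by
  have hj : j = j' - 1 := by
    have := hm _ ((hpre _).2 rfl)
    rw [hM] at this
    split_ifs at this with h
    · exact h.symm
    · omega
  intro k
  simp only [SPN.fire, hpre, hpost]
  rw [hM k]
  split_ifs <;> omega

theorem TraceTokenAt.fire_of_disjoint {N : WFNet P T A} {M : Marking P} {m : Move T} {j : ℕ}
    (hM : TraceTokenAt M j) (hpre : ∀ k, Sum.inl k ∉ pre N m)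
    (hpost : ∀ k, Sum.inl k ∉ post N m) : TraceTokenAt (fire N m M) j := by
  intro k
  simp [SPN.fire, hpre, hpost, hM k]

theorem TraceTokenAt.fire {σ : List A} {N : WFNet P T A} {M : Marking P} {m : Move T} {j : ℕ}
    (hM : TraceTokenAt M j) (hj : j ≤ σ.length) (hm : Enabled N (transitions σ N) M m) :
    ∃ j' ≤ σ.length, TraceTokenAt (SPN.fire N m M) j' := by
  obtain ⟨hmS, hen⟩ := hm
  cases m with
  | log j' =>
    obtain ⟨-, hj₂⟩ := hmS
    exact ⟨j', hj₂, hM.fire_of_shift hen (by simp [pre]) (by simp [post])⟩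
  | model t => exact ⟨j, hj, hM.fire_of_disjoint (by simp [pre]) (by simp [post])⟩
  | sync j' t =>
    obtain ⟨hj₁, a, ha, -⟩ := hmS
    have hj₂ : j' ≤ σ.length := by
      have := (List.getElem?_eq_some_iff.1 ha).1
      omega
    exact ⟨j', hj₂, hM.fire_of_shift hen (by simp [pre]) (by simp [post])⟩

theorem FiresTo.traceTokenAt {σ : List A} {N : WFNet P T A} {M M' : Marking P}
    {ts : List (Move T)} (h : FiresTo N (transitions σ N) M ts M') {j : ℕ} (hj : j ≤ σ.length)
    (hM : TraceTokenAt M j) : ∃ j' ≤ σ.length, TraceTokenAt M' j' := by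
  induction ts generalizing M j with
  | nil => cases h; exact ⟨j, hj, hM⟩
  | cons m ts ih =>
    obtain ⟨j', hj', hfire⟩ := hM.fire hj h.1
    exact ih h.2 hj' hfire

theorem TraceTokenAt.eq_final {σ : List A} {N : WFNet P T A} {M : Marking P} {j : ℕ}
    (hM : TraceTokenAt M j) (hgoal : 1 ≤ M (Sum.inl σ.length)) (k : ℕ) :
    M (Sum.inl k) = final σ N (Sum.inl k) := by
  have hj : σ.length = j := by
    rw [hM] at hgoal
    split_ifs at hgoal with h
    · exact h
    · omega
  simp [final, hM k, hj]

theorem FiresTo.feasible_count [DecidableEq T] {σ : List A} {N : WFNet P T A} {M M' : Marking P}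
    {ts : List (Move T)} (h : FiresTo N (transitions σ N) M ts M')
    (hfinal : ∀ k, M' (Sum.inl k) = final σ N (Sum.inl k)) :
    Feasible σ N M (fun m => ts.count m) := by
  classical
  refine ⟨fun j _ => ?_, fun p => ?_⟩
  · rw [finsum_mem_sep_count h.mem, finsum_mem_sep_count h.mem, ← hfinal j, h.cast_apply]
  · rw [finsum_mem_sep_count h.mem, finsum_mem_sep_count h.mem, ← h.cast_apply]
    exact Int.natCast_nonneg _

theorem heuristic_le_seqCost_of_feasible [DecidableEq T] {σ : List A} {N : WFNet P T A}
    {c : Move T → ℝ≥0} {M : Marking P} {ts : List (Move T)}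
    (hts : ∀ m ∈ ts, m ∈ transitions σ N)
    (hx : Feasible σ N M (fun m => ts.count m)) : heuristic σ N c M ≤ seqCost c ts :=
  calc heuristic σ N c M
      ≤ ∑ᶠ m ∈ transitions σ N, (ts.count m : ℝ≥0∞) * c m := iInf₂_le _ hx
    _ = seqCost c ts := by
      simpa [seqCost, nsmul_eq_mul] using finsum_mem_count_smul hts (fun m => (c m : ℝ≥0∞))

end SPN

/-- **Admissibility of the prefix-alignment heuristic.**
For every reachable marking `M` of the SPN and every firing sequence `ts` from `M`
to a goal marking `M'` (a marking with a token in the last trace-net place `p'_n`),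
the heuristic value `h(M)` is at most the total cost of `ts` (counting
multiplicities); hence `h` is a lower bound on the remaining cost to any goal
marking, i.e. `h` is admissible. -/
theorem heuristic_admissible
    {P T A : Type} (N : WFNet P T A) (σ : List A) (c : Move T → ℝ≥0)
    (M : Marking P) (hM : SPN.Reachable N (SPN.transitions σ N) (SPN.init σ N) M)
    (ts : List (Move T)) (M' : Marking P)
    (hfire : SPN.FiresTo N (SPN.transitions σ N) M ts M')
    (hgoal : 1 ≤ M' (Sum.inl σ.length)) :
    SPN.heuristic σ N c M ≤ SPN.seqCost c ts := by
  classical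
  obtain ⟨us, hus⟩ := hM
  obtain ⟨j, hj, hMj⟩ := hus.traceTokenAt (Nat.zero_le _) (SPN.traceTokenAt_init σ N)
  obtain ⟨j', -, hM'j'⟩ := hfire.traceTokenAt hj hMj
  exact SPN.heuristic_le_seqCost_of_feasible hfire.mem
    (hfire.feasible_count (hM'j'.eq_final hgoal))
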